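/- Let ζ^ψ = ζ⁰(Σ) + ψ·ζ̃ and ψ_min = min(ψ_ν,ψ_σ,ψ_η,ψ_ξ). Then for every ε ≥ 0 and every ζ ∈ ℝ⁴ with ‖ζ − ζ^ψ‖ ≤ ε, one has the upper bound H₁(ζ) ≤ −(ψ/2)·v^⊤ζ̃ + ( ψ_min⁻¹·(‖ζ̃‖ + ε/ψ) + ‖v‖ )·ε. -/

import Mathlib

open Finset

noncomputable section

namespace Stmt14

/-- The Euclidean norm of a vector in `ℝ^m`. -/
def enorm {m : ℕ} (z : Fin m → ℝ) : ℝ := Real.sqrt (∑ i, z i ^ 2)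

/-- The reference control `ζ⁰(Σ) = (0, Σ, 0, 0)`. -/
def zeta0 (Sig : ℝ) : Fin 4 → ℝ := ![0, Sig, 0, 0]

/-- The fourth standard basis vector `e₄` of `ℝ⁴`. -/
def e4 : Fin 4 → ℝ := fun i => if i = 3 then 1 else 0

/-- `c^⊤ Ψ v` for the diagonal matrix `Ψ = diag psi`. -/
def cPv (psi c v : Fin 4 → ℝ) : ℝ := ∑ i, c i * psi i * v i

/-- `c^⊤ Ψ c` for the diagonal matrix `Ψ = diag psi`. -/
def cPc (psi c : Fin 4 → ℝ) : ℝ := ∑ i, c i * psi i * c i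

/-- The Lagrange multiplier `λ`. -/
def lam (psi c v : Fin 4 → ℝ) : ℝ :=
  if 0 ≤ v 3 - cPv psi c v / cPc psi c * c 3 then cPv psi c v / cPc psi c
  else (cPv psi c v - c 3 * v 3 * psi 3) / (cPc psi c - c 3 ^ 2 * psi 3)

/-- The Lagrange multiplier `μ = max (-(v₄ - λ c₄)) 0`. -/
def mu (psi c v : Fin 4 → ℝ) : ℝ := max (-(v 3 - lam psi c v * c 3)) 0

/-- `ζ̃ = Ψ (v - λ c + μ e₄)`. -/
def zetaTilde (psi c v : Fin 4 → ℝ) : Fin 4 → ℝ := fun i =>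
  psi i * (v i - lam psi c v * c i + mu psi c v * e4 i)

/-- `H₁(ζ) = (1/(2ψ)) (ζ - ζ⁰(Σ))^⊤ Ψ⁻¹ (ζ - ζ⁰(Σ)) - v^⊤ (ζ - ζ⁰(Σ))`. -/
def H1 (Sig ψ : ℝ) (psi v : Fin 4 → ℝ) (z : Fin 4 → ℝ) : ℝ :=
  (1 / (2 * ψ)) * ∑ i, (z i - zeta0 Sig i) ^ 2 / psi i -
    ∑ i, v i * (z i - zeta0 Sig i)

/-- `ψ_min = min(ψ_ν, ψ_σ, ψ_η, ψ_ξ)`. -/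
def psiMin (psi : Fin 4 → ℝ) : ℝ := Finset.univ.inf' Finset.univ_nonempty psi

/-!
`ζ̃` satisfies the KKT conditions of its defining constrained problem: `c ⬝ ζ̃ = 0` and
`μ ζ̃₄ = 0`. Since `Ψ⁻¹ ζ̃ = v - λ c + μ e₄`, these give `ζ̃ᵀ Ψ⁻¹ ζ̃ = vᵀ ζ̃`. Writing
`ζ = ζ⁰(Σ) + ψ ζ̃ + d`, the quadratic `H₁` then expands to
`-(ψ/2) vᵀ ζ̃ + ζ̃ᵀ Ψ⁻¹ d + (1/(2ψ)) dᵀ Ψ⁻¹ d - vᵀ d`, and each of the last three terms is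
bounded by Cauchy–Schwarz using `Ψ⁻¹ ≤ ψ_min⁻¹` and `‖d‖ ≤ ε`.
-/

lemma enorm_nonneg {n : ℕ} (f : Fin n → ℝ) : 0 ≤ enorm f := Real.sqrt_nonneg _

lemma sum_abs_mul_abs_le_enorm_mul_enorm {n : ℕ} (f g : Fin n → ℝ) :
    ∑ i, |f i| * |g i| ≤ enorm f * enorm g := by
  simpa [enorm, sq_abs] using
    Real.sum_mul_le_sqrt_mul_sqrt univ (fun i => |f i|) (fun i => |g i|)

lemma sum_mul_div_le_inv_mul_enorm_mul_enorm {n : ℕ} {w : Fin n → ℝ} {m : ℝ} (hm : 0 < m)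
    (hw : ∀ i, m ≤ w i) (f g : Fin n → ℝ) :
    ∑ i, f i * g i / w i ≤ m⁻¹ * (enorm f * enorm g) :=
  calc ∑ i, f i * g i / w i ≤ ∑ i, m⁻¹ * (|f i| * |g i|) := sum_le_sum fun i _ => by
        rw [← abs_mul, ← div_eq_inv_mul]
        exact div_le_div₀ (abs_nonneg _) (le_abs_self _) hm (hw i)
    _ = m⁻¹ * ∑ i, |f i| * |g i| := (mul_sum _ _ _).symm
    _ ≤ m⁻¹ * (enorm f * enorm g) := by
        gcongr
        exact sum_abs_mul_abs_le_enorm_mul_enorm f g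

lemma neg_sum_mul_le_enorm_mul_enorm {n : ℕ} (f g : Fin n → ℝ) :
    -∑ i, f i * g i ≤ enorm f * enorm g :=
  calc _ ≤ |∑ i, f i * g i| := neg_le_abs _
    _ ≤ ∑ i, |f i| * |g i| := by
        simpa only [abs_mul] using abs_sum_le_sum_abs (fun i => f i * g i) univ
    _ ≤ enorm f * enorm g := sum_abs_mul_abs_le_enorm_mul_enorm f g

lemma sum_mul_div_add_sum_sq_div_sub_sum_mul_le {n : ℕ} {w : Fin n → ℝ} {m ψ ε : ℝ}
    (hm : 0 < m) (hw : ∀ i, m ≤ w i) (hψ : 0 < ψ) (t v d : Fin n → ℝ) (hd : enorm d ≤ ε) :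
    ∑ i, t i * d i / w i + 1 / (2 * ψ) * ∑ i, d i ^ 2 / w i - ∑ i, v i * d i
      ≤ (m⁻¹ * (enorm t + ε / ψ) + enorm v) * ε := by
  have hm' : 0 ≤ m⁻¹ := inv_nonneg.mpr hm.le
  have hε : 0 ≤ ε := (enorm_nonneg d).trans hd
  have hcross : ∑ i, t i * d i / w i ≤ m⁻¹ * enorm t * ε :=
    calc _ ≤ m⁻¹ * (enorm t * enorm d) := sum_mul_div_le_inv_mul_enorm_mul_enorm hm hw t d
      _ ≤ m⁻¹ * enorm t * ε := by
          rw [← mul_assoc]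
          exact mul_le_mul_of_nonneg_left hd (mul_nonneg hm' (enorm_nonneg t))
  have hquad : 1 / (2 * ψ) * ∑ i, d i ^ 2 / w i ≤ m⁻¹ * (ε / ψ) * ε :=
    calc _ ≤ 1 / (2 * ψ) * (m⁻¹ * (enorm d * enorm d)) := by
          simp only [sq]
          gcongr
          exact sum_mul_div_le_inv_mul_enorm_mul_enorm hm hw d d
      _ ≤ 1 / (2 * ψ) * (m⁻¹ * (ε * ε)) := by
          gcongr
          exact enorm_nonneg d
      _ = m⁻¹ * (ε / ψ) * ε / 2 := by field_simp
      _ ≤ m⁻¹ * (ε / ψ) * ε := half_le_self (by positivity)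
  have hlin : -∑ i, v i * d i ≤ enorm v * ε :=
    (neg_sum_mul_le_enorm_mul_enorm v d).trans (mul_le_mul_of_nonneg_left hd (enorm_nonneg v))
  linear_combination hcross + hquad + hlin

lemma psiMin_pos {psi : Fin 4 → ℝ} (hpsi : ∀ i, 0 < psi i) : 0 < psiMin psi :=
  (lt_inf'_iff _).mpr fun i _ => hpsi i

lemma psiMin_le (psi : Fin 4 → ℝ) (i : Fin 4) : psiMin psi ≤ psi i :=
  inf'_le _ (mem_univ i)

section KKT

variable {psi c v : Fin 4 → ℝ}

lemma cPc_sub_pos (hpsi : ∀ i, 0 < psi i) (hc : c 0 ≠ 0) :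
    0 < cPc psi c - c 3 ^ 2 * psi 3 := by
  have hc0 : 0 < c 0 ^ 2 * psi 0 := mul_pos (by positivity) (hpsi 0)
  have hc1 : 0 ≤ c 1 ^ 2 * psi 1 := mul_nonneg (sq_nonneg _) (hpsi 1).le
  have hc2 : 0 ≤ c 2 ^ 2 * psi 2 := mul_nonneg (sq_nonneg _) (hpsi 2).le
  simp only [cPc, Fin.sum_univ_four]
  linarith

/-- `μ` and `ζ̃₄ = ψ_ξ max(v₄ - λ c₄, 0)` are the negative and positive parts of the same number. -/
lemma mu_mul_zetaTilde_three : mu psi c v * zetaTilde psi c v 3 = 0 := by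
  simp only [zetaTilde, mu, e4, ↓reduceIte, mul_one]
  rcases le_total 0 (v 3 - lam psi c v * c 3) with h | h
  · rw [max_eq_right (by linarith)]; ring
  · rw [max_eq_left (by linarith)]; ring

lemma sum_mul_zetaTilde_eq_zero (hpsi3 : 0 ≤ psi 3) (hD : 0 < cPc psi c - c 3 ^ 2 * psi 3) :
    ∑ i, c i * zetaTilde psi c v i = 0 := by
  have hP : 0 < cPc psi c := by nlinarith [mul_nonneg (sq_nonneg (c 3)) hpsi3]
  have hsum : ∑ i, c i * zetaTilde psi c v i
      = cPv psi c v - lam psi c v * cPc psi c + mu psi c v * (c 3 * psi 3) := by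
    simp only [zetaTilde, e4, cPv, cPc, Fin.sum_univ_four, Fin.reduceEq, ↓reduceIte]
    ring
  rw [hsum]
  by_cases hif : 0 ≤ v 3 - cPv psi c v / cPc psi c * c 3
  · have hL : lam psi c v = cPv psi c v / cPc psi c := if_pos hif
    have hM : mu psi c v = 0 := by rw [mu, hL, max_eq_right (by linarith)]
    rw [hM, hL]
    field_simp
    ring
  · have hL : lam psi c v = (cPv psi c v - c 3 * v 3 * psi 3) /
        (cPc psi c - c 3 ^ 2 * psi 3) := if_neg hif
    -- `v₄ - λ c₄` and the tested quantity are `v₄ cᵀΨc - c₄ cᵀΨv` over positive denominators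
    have hneg : v 3 - lam psi c v * c 3 < 0 := by
      have h1 : v 3 * cPc psi c - cPv psi c v * c 3 < 0 := by
        rw [not_le, sub_neg, div_mul_eq_mul_div, lt_div_iff₀ hP] at hif
        linarith
      have h2 : v 3 - lam psi c v * c 3
          = (v 3 * cPc psi c - cPv psi c v * c 3) / (cPc psi c - c 3 ^ 2 * psi 3) := by
        rw [hL]
        field_simp
        ring
      rw [h2]
      exact div_neg_of_neg_of_pos h1 hD
    have hM : mu psi c v = -(v 3 - lam psi c v * c 3) := by
      rw [mu, max_eq_left (by linarith)]
    rw [hM, hL]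
    field_simp
    ring

lemma sum_zetaTilde_sq_div_eq (hpsi : ∀ i, 0 < psi i) (hD : 0 < cPc psi c - c 3 ^ 2 * psi 3) :
    ∑ i, zetaTilde psi c v i ^ 2 / psi i = ∑ i, v i * zetaTilde psi c v i := by
  have hdiv : ∀ i, zetaTilde psi c v i ^ 2 / psi i
      = zetaTilde psi c v i * (v i - lam psi c v * c i + mu psi c v * e4 i) := fun i => by
    simp only [zetaTilde]
    field_simp [(hpsi i).ne']
  have hexpand : ∑ i, zetaTilde psi c v i * (v i - lam psi c v * c i + mu psi c v * e4 i)
      = ∑ i, v i * zetaTilde psi c v i - lam psi c v * ∑ i, c i * zetaTilde psi c v i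
        + mu psi c v * zetaTilde psi c v 3 := by
    simp only [e4, Fin.sum_univ_four, Fin.reduceEq, ↓reduceIte]
    ring
  rw [sum_congr rfl fun i _ => hdiv i, hexpand, sum_mul_zetaTilde_eq_zero (hpsi 3).le hD,
    mu_mul_zetaTilde_three]
  ring

end KKT

lemma H1_expand (Sig ψ : ℝ) (hψ : ψ ≠ 0) {psi : Fin 4 → ℝ} (hpsi : ∀ i, 0 < psi i)
    (v t z : Fin 4 → ℝ) :
    let d : Fin 4 → ℝ := fun i => z i - (zeta0 Sig i + ψ * t i)
    H1 Sig ψ psi v z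
      = ψ / 2 * ∑ i, t i ^ 2 / psi i - ψ * ∑ i, v i * t i
        + ∑ i, t i * d i / psi i + 1 / (2 * ψ) * ∑ i, d i ^ 2 / psi i - ∑ i, v i * d i := by
  intro d
  have hz : ∀ i, z i - zeta0 Sig i = ψ * t i + d i := fun i => by simp only [d]; ring
  simp only [H1, hz, mul_sum, ← sum_add_distrib, ← sum_sub_distrib]
  refine sum_congr rfl fun i _ => ?_
  field_simp [(hpsi i).ne']
  ring

theorem H1_upper_bound_near_candidate_general
    (Sig : ℝ) (psi c v : Fin 4 → ℝ)
    (hpsi : ∀ i, 0 < psi i) (hc : c 0 ≠ 0)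
    (ψ : ℝ) (hψ : 0 < ψ) :
    ∀ ε : ℝ, 0 ≤ ε → ∀ z : Fin 4 → ℝ,
      enorm (fun i => z i - (zeta0 Sig i + ψ * zetaTilde psi c v i)) ≤ ε →
      H1 Sig ψ psi v z ≤
        -(ψ / 2) * (∑ i, v i * zetaTilde psi c v i) +
          ((psiMin psi)⁻¹ * (enorm (zetaTilde psi c v) + ε / ψ) + enorm v) * ε := by
  intro ε _ z hz
  rw [H1_expand Sig ψ hψ.ne' hpsi v (zetaTilde psi c v) z,
    sum_zetaTilde_sq_div_eq hpsi (cPc_sub_pos hpsi hc)]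
  linear_combination sum_mul_div_add_sum_sq_div_sub_sum_mul_le (psiMin_pos hpsi)
    (psiMin_le psi) hψ (zetaTilde psi c v) v _ hz

/-- For every `ε ≥ 0` and every `ζ` with `‖ζ - ζ^ψ‖ ≤ ε` (where `ζ^ψ = ζ⁰(Σ) + ψ ζ̃`):
`H₁(ζ) ≤ -(ψ/2) v^⊤ ζ̃ + (ψ_min⁻¹ (‖ζ̃‖ + ε/ψ) + ‖v‖) ε`. -/
theorem H1_upper_bound_near_candidate
    (Sig : ℝ) (hSig : 0 < Sig) (psi c v : Fin 4 → ℝ)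
    (hpsi : ∀ i, 0 < psi i) (hc : c 0 ≠ 0)
    (ψ : ℝ) (hψ : 0 < ψ) :
    ∀ ε : ℝ, 0 ≤ ε → ∀ z : Fin 4 → ℝ,
      enorm (fun i => z i - (zeta0 Sig i + ψ * zetaTilde psi c v i)) ≤ ε →
      H1 Sig ψ psi v z ≤
        -(ψ / 2) * (∑ i, v i * zetaTilde psi c v i) +
          ((psiMin psi)⁻¹ * (enorm (zetaTilde psi c v) + ε / ψ) + enorm v) * ε :=
  H1_upper_bound_near_candidate_general Sig psi c v hpsi hc ψ hψ

end Stmt14
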